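/- arXiv:1808.03056 — 2 statements merged into one kernel-verified Lean document; each statement's English description precedes it below -/
import Mathlib

section
/- Let A be a C*-algebra and a ∈ A invertible. If ρ(a*, a⁻¹) = 0, then σ(a) ⊆ {λ ∈ ℂ : |λ| = 1}. -/
/-- The iterated commutator `C_{a,b}^n` applied to `1`, where `C_{a,b}(x) = a*x - x*b`. -/
noncomputable def citer {A : Type*} [Ring A] (a b : A) (n : ℕ) : A :=
  (fun x => a * x - x * b)^[n] 1

/-- `ρ(a,b) = limsup_n ‖C_{a,b}^n(1)‖^{1/n}`. -/
noncomputable def rho {A : Type*} [NormedRing A] (a b : A) : ℝ :=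
  Filter.limsup (fun n : ℕ => ‖citer a b n‖ ^ ((n : ℝ)⁻¹)) Filter.atTop

/-! With `Φ w = a⋆ * w * a`, one has `(Φ - 1)ᵏ 1 = C^k(1) * aᵏ` for `C = C_{a⋆,a⁻¹}`, while
`Φⁿ 1 = (aⁿ)⋆ aⁿ` has norm `‖aⁿ‖²` by the C⋆-identity. Expanding `Φⁿ = ((Φ - 1) + 1)ⁿ`
binomially, `ρ(a⋆, a⁻¹) = 0` gives `‖aⁿ‖² ≤ K (1 + ε)ⁿ` for every `ε > 0`, so `σ(a)` lies in
the closed unit disc. The iterates for `a⁻¹` are `C_{(a⁻¹)⋆,a}^k(1) = ±(a⋆)⁻ᵏ C^k(1) aᵏ`, so they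
decay just as fast and the same bound puts `σ(a⁻¹) = σ(a)⁻¹` in the closed unit disc. -/

open Filter Asymptotics

section Ring

variable {A : Type*} [Ring A]

theorem citer_succ (x y : A) (n : ℕ) :
    citer x y (n + 1) = x * citer x y n - citer x y n * y :=
  Function.iterate_succ_apply' _ n 1

theorem citer_inv_eq_neg_one_pow_mul (x u : Aˣ) (n : ℕ) :
    citer (↑x⁻¹ : A) ↑u n = (-1) ^ n * (↑(x ^ n)⁻¹ * citer (↑x : A) ↑u⁻¹ n * ↑(u ^ n)) := by
  induction n with
  | zero => simp [citer]
  | succ n ih =>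
    set c := citer (↑x : A) ↑u⁻¹ n
    have hx : (↑(x ^ (n + 1))⁻¹ : A) * (↑x * c) * ↑(u ^ (n + 1))
        = ↑(x ^ n)⁻¹ * c * ↑(u ^ n) * ↑u := by
      rw [← mul_assoc, ← Units.val_mul, pow_succ', mul_inv_rev, inv_mul_cancel_right, pow_succ,
        Units.val_mul]
      simp only [mul_assoc]
    have hu : (↑(x ^ (n + 1))⁻¹ : A) * (c * ↑u⁻¹) * ↑(u ^ (n + 1))
        = ↑x⁻¹ * (↑(x ^ n)⁻¹ * c * ↑(u ^ n)) := by
      rw [mul_assoc, mul_assoc c, ← Units.val_mul u⁻¹, pow_succ' u, inv_mul_cancel_left, pow_succ,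
        mul_inv_rev, Units.val_mul]
      simp only [mul_assoc]
    have hs : (↑x⁻¹ : A) * (-1) ^ n = (-1) ^ n * ↑x⁻¹ := ((Commute.neg_one_right _).pow_right n).eq
    rw [citer_succ, citer_succ, ih, mul_sub, sub_mul, hx, hu, ← mul_assoc (↑x⁻¹ : A), hs]
    noncomm_ring

theorem mulLeftRight_pow_apply (x y w : A) (n : ℕ) :
    (LinearMap.mulLeftRight ℤ (x, y) ^ n) w = x ^ n * w * y ^ n := by
  induction n with
  | zero => simp
  | succ n ih =>
    rw [pow_succ', Module.End.mul_apply, ih, LinearMap.mulLeftRight_apply, pow_succ', pow_succ]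
    simp only [mul_assoc]

theorem mulLeftRight_sub_one_pow_apply_one (x : A) (u : Aˣ) (n : ℕ) :
    ((LinearMap.mulLeftRight ℤ (x, (u : A)) - 1) ^ n) 1 = citer x ↑u⁻¹ n * ↑(u ^ n) := by
  induction n with
  | zero => simp [citer]
  | succ n ih =>
    have hu : (↑u⁻¹ : A) * ↑(u ^ (n + 1)) = ↑(u ^ n) := by
      rw [← Units.val_mul, pow_succ', inv_mul_cancel_left]
    rw [pow_succ', Module.End.mul_apply, ih, LinearMap.sub_apply, LinearMap.mulLeftRight_apply,
      Module.End.one_apply, citer_succ, sub_mul, mul_assoc _ (↑u⁻¹ : A), hu, pow_succ,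
      Units.val_mul]
    noncomm_ring

end Ring

theorem Module.End.pow_apply_eq_sum_choose {R M : Type*} [CommRing R] [AddCommGroup M]
    [Module R M] (f : Module.End R M) (n : ℕ) (w : M) :
    (f ^ n) w = ∑ k ∈ Finset.range (n + 1), n.choose k • ((f - 1) ^ k) w := by
  conv_lhs => rw [← sub_add_cancel f 1, (Commute.one_right (f - 1)).add_pow, LinearMap.sum_apply]
  refine Finset.sum_congr rfl fun k _ => ?_
  rw [one_pow, mul_one, Module.End.mul_apply, Module.End.natCast_apply, map_nsmul]

theorem Module.End.norm_pow_apply_le {R M : Type*} [CommRing R] [SeminormedAddCommGroup M]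
    [Module R M] (f : Module.End R M) (w : M) {C r : ℝ}
    (h : ∀ k, ‖((f - 1) ^ k) w‖ ≤ C * r ^ k) (n : ℕ) : ‖(f ^ n) w‖ ≤ C * (1 + r) ^ n := by
  rw [f.pow_apply_eq_sum_choose, add_comm (1 : ℝ), add_pow, Finset.mul_sum]
  refine (norm_sum_le _ _).trans (Finset.sum_le_sum fun k _ => ?_)
  calc ‖n.choose k • ((f - 1) ^ k) w‖ ≤ n.choose k * (C * r ^ k) :=
        norm_nsmul_le.trans (mul_le_mul_of_nonneg_left (h k) (Nat.cast_nonneg _))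
    _ = C * (r ^ k * 1 ^ (n - k) * n.choose k) := by ring

theorem eventually_pow_mul_le_pow {f : ℕ → ℝ} (hf : ∀ ε > 0, ∀ᶠ n in atTop, f n ≤ ε ^ n)
    {K : ℝ} (hK : 0 ≤ K) {ε : ℝ} (hε : 0 < ε) : ∀ᶠ n in atTop, K ^ n * f n ≤ ε ^ n := by
  filter_upwards [hf (ε / (K + 1)) (by positivity)] with n hn
  calc K ^ n * f n ≤ K ^ n * (ε / (K + 1)) ^ n := by gcongr
    _ = (K * (ε / (K + 1))) ^ n := (mul_pow _ _ _).symm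
    _ ≤ ε ^ n := by
      gcongr
      rw [mul_div_assoc', div_le_iff₀ (by positivity)]
      nlinarith

theorem exists_norm_le_mul_pow {E : Type*} [NormedAddCommGroup E] {c : ℕ → E} {ε : ℝ}
    (hε : 0 < ε) (h : ∀ᶠ n in atTop, ‖c n‖ ≤ ε ^ n) : ∃ C, ∀ n, ‖c n‖ ≤ C * ε ^ n := by
  have hO : c =O[atTop] (ε ^ ·) := IsBigO.of_bound 1 <| h.mono fun n hn => by
    rwa [one_mul, Real.norm_of_nonneg (by positivity)]
  obtain ⟨C, hC⟩ := (isBigO_nat_atTop_iff fun n hn => absurd hn (pow_ne_zero n hε.ne')).1 hO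
  exact ⟨C, fun n => by simpa [abs_of_pos hε] using hC n⟩

theorem le_of_isBigO_pow_pow {r s : ℝ} (hs : 0 ≤ s)
    (h : (fun n : ℕ => r ^ n) =O[atTop] fun n => s ^ n) : r ≤ s := by
  by_contra! hsr
  exact isLittleO_irrefl (Frequently.of_forall fun n => pow_ne_zero n (hs.trans_lt hsr).ne')
    (h.trans_isLittleO (isLittleO_pow_pow_of_lt_left hs hsr))

section NormedRing

variable {A : Type*} [NormedRing A]

theorem norm_citer_le (x y : A) (n : ℕ) :
    ‖citer x y n‖ ≤ ‖(1 : A)‖ * (‖x‖ + ‖y‖) ^ n := by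
  induction n with
  | zero => simp [citer]
  | succ n ih =>
    calc ‖citer x y (n + 1)‖ ≤ ‖x‖ * ‖citer x y n‖ + ‖citer x y n‖ * ‖y‖ := by
          rw [citer_succ]
          exact (norm_sub_le _ _).trans (add_le_add (norm_mul_le _ _) (norm_mul_le _ _))
      _ = (‖x‖ + ‖y‖) * ‖citer x y n‖ := by ring
      _ ≤ (‖x‖ + ‖y‖) * (‖(1 : A)‖ * (‖x‖ + ‖y‖) ^ n) := by gcongr
      _ = ‖(1 : A)‖ * (‖x‖ + ‖y‖) ^ (n + 1) := by ring

-- Without this bound, `rho x y = 0` would say nothing: `limsup` in `ℝ` is junk when unbounded.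
theorem isBoundedUnder_rpow_norm_citer (x y : A) :
    IsBoundedUnder (· ≤ ·) atTop fun n : ℕ => ‖citer x y n‖ ^ (n : ℝ)⁻¹ := by
  refine isBoundedUnder_of_eventually_le (a := (‖(1 : A)‖ + 1) * (‖x‖ + ‖y‖)) ?_
  filter_upwards [eventually_ne_atTop 0] with n hn
  rw [Real.rpow_inv_le_iff_of_pos (norm_nonneg _) (by positivity) (by positivity),
    Real.rpow_natCast, mul_pow]
  calc ‖citer x y n‖ ≤ ‖(1 : A)‖ * (‖x‖ + ‖y‖) ^ n := norm_citer_le x y n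
    _ ≤ (‖(1 : A)‖ + 1) ^ n * (‖x‖ + ‖y‖) ^ n := by
      gcongr
      exact (le_add_of_nonneg_right zero_le_one).trans (le_self_pow₀ (by simp) hn)

theorem eventually_norm_citer_le_pow {x y : A} (h : rho x y = 0) {ε : ℝ} (hε : 0 < ε) :
    ∀ᶠ n in atTop, ‖citer x y n‖ ≤ ε ^ n := by
  rw [rho] at h
  filter_upwards [eventually_lt_of_limsup_lt (h ▸ hε) (isBoundedUnder_rpow_norm_citer x y),
    eventually_ne_atTop 0] with n hn hn0
  rw [← Real.rpow_natCast]
  exact (Real.rpow_inv_le_iff_of_pos (norm_nonneg _) hε.le (by positivity)).1 hn.le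

theorem norm_citer_inv_le [NormOneClass A] (x u : Aˣ) (n : ℕ) :
    ‖citer (↑x⁻¹ : A) ↑u n‖ ≤ (‖(↑x⁻¹ : A)‖ * ‖(u : A)‖) ^ n * ‖citer (↑x : A) ↑u⁻¹ n‖ := by
  have hsign : ∀ w : A, ‖(-1) ^ n * w‖ = ‖w‖ := fun w => by
    rcases neg_one_pow_eq_or A n with h | h <;> simp [h]
  rw [citer_inv_eq_neg_one_pow_mul, hsign, mul_pow, ← inv_pow, Units.val_pow_eq_pow_val,
    Units.val_pow_eq_pow_val]
  calc ‖(↑x⁻¹ : A) ^ n * citer (↑x : A) ↑u⁻¹ n * (u : A) ^ n‖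
      ≤ ‖(↑x⁻¹ : A)‖ ^ n * ‖citer (↑x : A) ↑u⁻¹ n‖ * ‖(u : A)‖ ^ n :=
        norm_mul₃_le.trans (by gcongr <;> exact norm_pow_le _ _)
    _ = _ := by ring

end NormedRing

theorem spectrum.norm_sq_le_of_isBigO {𝕜 A : Type*} [NormedField 𝕜] [NormedRing A]
    [NormedAlgebra 𝕜 A] [CompleteSpace A] [NormOneClass A] {b : A} {s : ℝ} (hs : 0 ≤ s)
    (h : (fun n : ℕ => ‖b ^ n‖ ^ 2) =O[atTop] (s ^ ·)) {z : 𝕜} (hz : z ∈ spectrum 𝕜 b) :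
    ‖z‖ ^ 2 ≤ s := by
  refine le_of_isBigO_pow_pow hs (IsBigO.trans (IsBigO.of_bound 1 ?_) h)
  refine Eventually.of_forall fun n => ?_
  rw [one_mul, Real.norm_of_nonneg (by positivity), Real.norm_of_nonneg (by positivity),
    ← pow_mul, mul_comm, pow_mul, ← norm_pow]
  gcongr
  exact spectrum.norm_le_norm_of_mem (spectrum.pow_mem_pow b n hz)

theorem CStarRing.norm_le_one_of_mem_spectrum {A : Type*} [NormedRing A] [StarRing A]
    [CStarRing A] [CompleteSpace A] [NormedAlgebra ℂ A] [Nontrivial A] (a : Aˣ)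
    (h : ∀ ε > 0, ∀ᶠ n in atTop, ‖citer (star (a : A)) ↑a⁻¹ n‖ ≤ ε ^ n) {z : ℂ}
    (hz : z ∈ spectrum ℂ (a : A)) : ‖z‖ ≤ 1 := by
  suffices ∀ ε > 0, ‖z‖ ^ 2 ≤ 1 + ε from
    (sq_le_one_iff₀ (norm_nonneg z)).1 (le_of_forall_pos_le_add this)
  intro ε hε
  set Φ := LinearMap.mulLeftRight ℤ (star (a : A), (a : A))
  have hdecay : ∀ᶠ k in atTop, ‖((Φ - 1) ^ k) 1‖ ≤ ε ^ k := by
    filter_upwards [eventually_pow_mul_le_pow h (norm_nonneg (a : A)) hε] with k hk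
    rw [mulLeftRight_sub_one_pow_apply_one, Units.val_pow_eq_pow_val]
    calc _ ≤ ‖citer (star (a : A)) ↑a⁻¹ k‖ * ‖(a : A)‖ ^ k :=
          (norm_mul_le _ _).trans (by gcongr; exact norm_pow_le _ _)
      _ ≤ ε ^ k := by rwa [mul_comm]
  obtain ⟨C, hC⟩ := exists_norm_le_mul_pow hε hdecay
  refine spectrum.norm_sq_le_of_isBigO (by positivity) (IsBigO.of_bound C ?_) hz
  refine Eventually.of_forall fun n => ?_
  calc ‖‖(a : A) ^ n‖ ^ 2‖ = ‖(Φ ^ n) 1‖ := by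
        rw [mulLeftRight_pow_apply, mul_one, ← star_pow, CStarRing.norm_star_mul_self,
          norm_pow, norm_norm, sq]
    _ ≤ C * (1 + ε) ^ n := Module.End.norm_pow_apply_le Φ 1 hC n
    _ = C * ‖(1 + ε) ^ n‖ := by rw [Real.norm_of_nonneg (by positivity)]

theorem stmt_15_general {A : Type*} [NormedRing A] [StarRing A] [CStarRing A] [CompleteSpace A]
    [NormedAlgebra ℂ A]
    (a : Aˣ) (h : rho (star (a : A)) ((a⁻¹ : Aˣ) : A) = 0) :
    ∀ z ∈ spectrum ℂ (a : A), ‖z‖ = 1 := by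
  intro z hz
  have : Nontrivial A := not_subsingleton_iff_nontrivial.mp fun _ => by
    simp [spectrum.of_subsingleton] at hz
  have hz0 : z ≠ 0 := ne_of_mem_of_not_mem hz (spectrum.zero_notMem ℂ a.isUnit)
  have hdecay : ∀ ε > 0, ∀ᶠ n in atTop, ‖citer (star (a : A)) ↑a⁻¹ n‖ ≤ ε ^ n :=
    fun ε hε => eventually_norm_citer_le_pow h hε
  have hdecay_inv : ∀ ε > 0, ∀ᶠ n in atTop, ‖citer (star (↑a⁻¹ : A)) ↑a⁻¹⁻¹ n‖ ≤ ε ^ n := by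
    intro ε hε
    filter_upwards [eventually_pow_mul_le_pow hdecay
      (mul_nonneg (norm_nonneg (↑a⁻¹ : A)) (norm_nonneg (a : A))) hε] with n hn
    have := norm_citer_inv_le (star a) a n
    rw [Units.coe_star_inv, Units.coe_star, norm_star] at this
    rw [inv_inv]
    exact this.trans hn
  have hinv : z⁻¹ ∈ spectrum ℂ (↑a⁻¹ : A) := by
    have := (spectrum.inv_mem_iff (r := Units.mk0 z hz0) (a := a)).1 hz
    rwa [Units.val_inv_eq_inv_val, Units.val_mk0] at this
  have hle_inv := CStarRing.norm_le_one_of_mem_spectrum a⁻¹ hdecay_inv hinv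
  rw [norm_inv, inv_le_one₀ (norm_pos_iff.2 hz0)] at hle_inv
  exact le_antisymm (CStarRing.norm_le_one_of_mem_spectrum a hdecay hz) hle_inv

/-- If ρ(a*, a⁻¹) = 0 for an invertible element of a C*-algebra,
then σ(a) lies on the unit circle. -/
theorem stmt_15 {A : Type*} [NormedRing A] [StarRing A] [CStarRing A] [CompleteSpace A]
    [NormedAlgebra ℂ A] [StarModule ℂ A]
    (a : Aˣ) (h : rho (star (a : A)) ((a⁻¹ : Aˣ) : A) = 0) :
    ∀ z ∈ spectrum ℂ (a : A), ‖z‖ = 1 :=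
  stmt_15_general a h
end

section
/- Let A be a C*-algebra and a ∈ A invertible. Then (a⁻ⁿ)* a⁻ⁿ = \sum_{j=0}^n \binom{n}{j} (C_{(a⁻¹)*, a}^j (1)) a^{-j} for every natural number n. -/
lemma citer_succ_s16 {A : Type*} [Ring A] (a b : A) (j : ℕ) :
    citer a b (j + 1) = a * citer a b j - citer a b j * b := by
  simp [citer, Function.iterate_succ_apply']

/-- (a⁻ⁿ)* a⁻ⁿ = Σ_{j=0}^n (n choose j) (C_{(a⁻¹)*, a}^j(1)) a⁻ʲ. -/
theorem stmt_16 {A : Type*} [NormedRing A] [StarRing A] [CStarRing A] [CompleteSpace A]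
    [NormedAlgebra ℂ A] [StarModule ℂ A]
    (a : Aˣ) (n : ℕ) :
    star ((↑(a⁻¹ ^ n) : A)) * (↑(a⁻¹ ^ n) : A) =
      ∑ j ∈ Finset.range (n + 1),
        (n.choose j) • (citer (star ((a⁻¹ : Aˣ) : A)) (a : A) j * (↑(a⁻¹ ^ j) : A)) := by
  set b : A := star ((a⁻¹ : Aˣ) : A) with hb
  set g : ℕ → A := fun j => citer b (a : A) j * (↑(a⁻¹ ^ j) : A) with hg
  have hterm : ∀ j : ℕ, b * g j * ((a⁻¹ : Aˣ) : A) = g (j + 1) + g j := by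
    intro j
    have h1 : (↑(a⁻¹ ^ j) : A) * ((a⁻¹ : Aˣ) : A) = (↑(a⁻¹ ^ (j + 1)) : A) := by
      rw [pow_succ, Units.val_mul]
    have h2 : (a : A) * (↑(a⁻¹ ^ (j + 1)) : A) = (↑(a⁻¹ ^ j) : A) := by
      rw [pow_succ', Units.val_mul, ← mul_assoc]
      simp
    simp only [hg, citer_succ_s16, sub_mul, mul_assoc, h1]
    rw [← mul_assoc (citer b (a:A) j) (a:A), mul_assoc (citer b (a:A) j) (a:A), h2]
    ring_nf
    abel
  induction n with
  | zero => simp [hg, citer]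
  | succ n ih =>
    have L : star ((↑(a⁻¹ ^ (n + 1)) : A)) * (↑(a⁻¹ ^ (n + 1)) : A) =
        b * (star ((↑(a⁻¹ ^ n) : A)) * (↑(a⁻¹ ^ n) : A)) * ((a⁻¹ : Aˣ) : A) := by
      rw [pow_succ, Units.val_mul, star_mul]
      noncomm_ring
    rw [L, ih, Finset.mul_sum, Finset.sum_mul]
    have : ∀ j ∈ Finset.range (n + 1),
        b * ((n.choose j) • g j) * ((a⁻¹ : Aˣ) : A)
          = (n.choose j) • g (j + 1) + (n.choose j) • g j := by
      intro j _
      rw [mul_smul_comm, smul_mul_assoc, hterm j, smul_add]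
    rw [Finset.sum_congr rfl this, Finset.sum_add_distrib]
    have hright : ∑ j ∈ Finset.range (n + 2), ((n + 1).choose j) • g j
        = (∑ j ∈ Finset.range (n + 1), (n.choose j) • g (j + 1))
          + ∑ j ∈ Finset.range (n + 1), (n.choose j) • g j := by
      rw [Finset.sum_range_succ' _ (n + 1)]
      simp only [Nat.choose_succ_succ, add_smul]
      rw [Finset.sum_add_distrib]
      have h3 : (∑ j ∈ Finset.range (n + 1), (n.choose (j + 1)) • g (j + 1))
          + ((n + 1).choose 0) • g 0 = ∑ j ∈ Finset.range (n + 1), (n.choose j) • g j := by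
        rw [Finset.sum_range_succ' (fun j => (n.choose j) • g j) n, Finset.sum_range_succ]
        simp
      rw [add_assoc, h3]
    exact hright.symm
end
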